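/- arXiv:math/0408351 — 5 statements merged into one kernel-verified Lean document; each statement's English description precedes it below -/
import Mathlib

section
/- Let R be a Noetherian commutative ring, G ≅ R^e free of rank e > 0, and E ⊆ G an R-submodule. If (0) = q_1 ∩ … ∩ q_s is a shortest primary decomposition of the zero ideal in R, then (0) = Q_1 ∩ … ∩ Q_s is a shortest primary decomposition of the zero ideal in the Rees algebra R_G(E), where Q_i = q_i·S_R(G) ∩ R_G(E). Consequently, the minimal primes of R_G(E) are exactly the ideals p·S_R(G) ∩ R_G(E) with p ∈ Min(R). -/
open IsLocalRing

noncomputable section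

/-- The embedding of `R^e` into the polynomial ring `S_R(R^e)` as linear forms. -/
def emb (R : Type*) [CommRing R] (e : ℕ) : (Fin e → R) →ₗ[R] MvPolynomial (Fin e) R where
  toFun v := ∑ i, v i • MvPolynomial.X i
  map_add' x y := by simp [add_smul, Finset.sum_add_distrib]
  map_smul' r x := by simp [Finset.smul_sum, smul_smul]

/-- `E_n`, the `n`-th Rees power of `E ⊆ R^e`. -/
def reesPow {R : Type*} [CommRing R] {e : ℕ} (E : Submodule R (Fin e → R)) (n : ℕ) :
    Submodule R (MvPolynomial (Fin e) R) :=
  (Submodule.map (emb R e) E) ^ n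

/-- The Rees algebra `R_G(E)` of `E ⊆ G = R^e`. -/
def ReesAlg {R : Type*} [CommRing R] {e : ℕ} (E : Submodule R (Fin e → R)) :
    Subalgebra R (MvPolynomial (Fin e) R) :=
  Algebra.adjoin R (Submodule.map (emb R e) E : Set (MvPolynomial (Fin e) R))

/-- The quotient module `G_n/E_n`. -/
abbrev GmodE {R : Type*} [CommRing R] {e : ℕ} (E : Submodule R (Fin e → R)) (n : ℕ) :=
  ↥(reesPow (⊤ : Submodule R (Fin e → R)) n) ⧸
    (Submodule.comap (reesPow (⊤ : Submodule R (Fin e → R)) n).subtype (reesPow E n))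

/-- Sup of lengths of `M`-regular sequences with entries in `I` (grade/depth). -/
def rdepth {R : Type*} [CommRing R] (I : Ideal R) (M : Type*) [AddCommGroup M] [Module R M] :
    ℕ∞ :=
  ⨆ (rs : List R) (_ : ∀ r ∈ rs, r ∈ I) (_ : RingTheory.Sequence.IsRegular M rs),
    (rs.length : ℕ∞)

/-- Depth over a local ring. -/
def mdepth (R : Type*) [CommRing R] [IsLocalRing R] (M : Type*) [AddCommGroup M] [Module R M] :
    ℕ∞ :=
  rdepth (maximalIdeal R) M

/-- The extension `m·R_G(E)` of the maximal ideal to the Rees algebra. -/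
def fibIdeal (R : Type*) [CommRing R] [IsLocalRing R] {e : ℕ} (E : Submodule R (Fin e → R)) :
    Ideal ↥(ReesAlg E) :=
  Ideal.map (algebraMap R ↥(ReesAlg E)) (maximalIdeal R)

/-- The analytic spread `ℓ_G(E) = dim R_G(E)/m·R_G(E)`. -/
def aSpread (R : Type*) [CommRing R] [IsLocalRing R] {e : ℕ} (E : Submodule R (Fin e → R)) :
    WithBot ℕ∞ :=
  ringKrullDim (↥(ReesAlg E) ⧸ fibIdeal R E)

/-- The image `(E + IG)/IG ⊆ (R/I)^e`. -/
def pushE {R : Type*} [CommRing R] {e : ℕ} (I : Ideal R) (E : Submodule R (Fin e → R)) :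
    Submodule (R ⧸ I) (Fin e → R ⧸ I) :=
  Submodule.span (R ⧸ I) ((fun v i => Ideal.Quotient.mk I (v i)) '' (E : Set (Fin e → R)))

/-!
Nothing here is special to the Rees algebra: the argument works for any `R`-subalgebra `A` of
`S = R[X_1, …, X_e]`, with `Q = qS ∩ A`. Contracting `Q` further to `R` gives back `q` (look at
constant coefficients), so distinct radicals and irredundancy lift from `R` to `A`. The ideal `qS`
is primary by McCoy's theorem: a zero divisor of `(R/q)[X]` is killed by a nonzero constant, so
all its coefficients are zero divisors of `R/q`, hence nilpotent; and contraction preserves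
primary ideals. Finally `⋂ qᵢS = (⋂ qᵢ)S = 0`, so every prime `P` of `A` contains some `Qᵢ`, hence
`rad Qᵢ ⊇ pS ∩ A` for a minimal prime `p ⊆ rad qᵢ`; as `pS ∩ A` is prime and contracts to `p`,
the minimal primes of `A` are exactly these ideals.
-/

namespace Ideal

variable {R S : Type*} [CommRing R] [CommRing S]

lemma isPrimary_bot_iff :
    (⊥ : Ideal R).IsPrimary ↔ Nontrivial R ∧ ∀ {x y : R}, x * y = 0 → x = 0 ∨ IsNilpotent y := by
  rw [isPrimary_iff, Ne, subsingleton_iff_bot_eq_top, Submodule.subsingleton_iff,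
    not_subsingleton_iff_nontrivial]
  simp only [mem_bot, ← mem_nilradical]
  rfl

lemma IsPrimary.isPrimary_bot_quotient {I : Ideal R} (hI : I.IsPrimary) :
    (⊥ : Ideal (R ⧸ I)).IsPrimary := by
  refine isPrimary_bot_iff.2 ⟨Quotient.nontrivial_iff.2 hI.ne_top, fun {x y} hxy => ?_⟩
  obtain ⟨x, rfl⟩ := Quotient.mk_surjective x
  obtain ⟨y, rfl⟩ := Quotient.mk_surjective y
  rw [← map_mul, Quotient.eq_zero_iff_mem] at hxy
  refine (isPrimary_iff.1 hI).2 hxy |>.imp Quotient.eq_zero_iff_mem.2 fun ⟨n, hn⟩ => ⟨n, ?_⟩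
  rw [← map_pow, Quotient.eq_zero_iff_mem]
  exact hn

lemma isPrimary_bot_of_injective (f : R →+* S) (hf : Function.Injective f)
    (h : (⊥ : Ideal S).IsPrimary) : (⊥ : Ideal R).IsPrimary :=
  comap_bot_of_injective f hf ▸ h.comap f

end Ideal

open Polynomial in
lemma Polynomial.isPrimary_bot {R : Type*} [CommRing R] (h : (⊥ : Ideal R).IsPrimary) :
    (⊥ : Ideal R[X]).IsPrimary := by
  obtain ⟨_, h⟩ := Ideal.isPrimary_bot_iff.1 h
  refine Ideal.isPrimary_bot_iff.2
    ⟨inferInstance, fun {f g} hfg => or_iff_not_imp_left.2 fun hf => ?_⟩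
  obtain ⟨a, ha, hag⟩ := notMem_nonZeroDivisors_iff.1
    (notMem_nonZeroDivisors_iff_right.2 ⟨f, hfg, hf⟩)
  refine Polynomial.isNilpotent_iff.2 fun i => (h ?_).resolve_left ha
  simpa using congr(coeff $hag i)

namespace MvPolynomial

variable {R : Type*} [CommRing R]

lemma isPrimary_bot (h : (⊥ : Ideal R).IsPrimary) :
    ∀ n, (⊥ : Ideal (MvPolynomial (Fin n) R)).IsPrimary
  | 0 => Ideal.isPrimary_bot_of_injective (isEmptyRingEquiv R (Fin 0)).toRingHom
      (isEmptyRingEquiv R (Fin 0)).injective h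
  | n + 1 => Ideal.isPrimary_bot_of_injective (finSuccEquiv R n).toRingHom
      (finSuccEquiv R n).injective
      (Polynomial.isPrimary_bot (isPrimary_bot h n))

lemma isPrimary_map_C {n : ℕ} {q : Ideal R} (hq : q.IsPrimary) :
    (q.map (C : R →+* MvPolynomial (Fin n) R)).IsPrimary := by
  rw [← Ideal.mk_ker (I := q), ← ker_map, RingHom.ker_eq_comap_bot]
  exact (isPrimary_bot hq.isPrimary_bot_quotient n).comap _

lemma isPrime_map_C {σ : Type*} {p : Ideal R} [p.IsPrime] :
    (p.map (C : R →+* MvPolynomial σ R)).IsPrime := by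
  rw [← Ideal.mk_ker (I := p), ← ker_map]
  exact RingHom.ker_isPrime _

lemma map_C_iInf {σ ι : Type*} (I : ι → Ideal R) :
    (⨅ i, I i).map (C : R →+* MvPolynomial σ R) = ⨅ i, (I i).map C := by
  ext f
  simp only [mem_map_C_iff, Ideal.mem_iInf]
  exact forall_comm

lemma comap_C_map_C {σ : Type*} (I : Ideal R) :
    (I.map (C : R →+* MvPolynomial σ R)).comap C = I := by
  classical
  ext x
  simp [mem_map_C_iff, coeff_C, apply_ite]

end MvPolynomial

namespace Subalgebra

variable {R σ : Type*} [CommRing R] (A : Subalgebra R (MvPolynomial σ R))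

def contractedExtension (I : Ideal R) : Ideal A :=
  (I.map (algebraMap R (MvPolynomial σ R))).comap A.val

lemma comap_algebraMap_contractedExtension (I : Ideal R) :
    (A.contractedExtension I).comap (algebraMap R A) = I :=
  MvPolynomial.comap_C_map_C I

lemma isPrime_contractedExtension (p : Ideal R) [p.IsPrime] : (A.contractedExtension p).IsPrime :=
  have := MvPolynomial.isPrime_map_C (σ := σ) (p := p)
  Ideal.IsPrime.comap (hK := this) _

lemma isPrimary_contractedExtension {n : ℕ} (A : Subalgebra R (MvPolynomial (Fin n) R))
    {q : Ideal R} (hq : q.IsPrimary) : (A.contractedExtension q).IsPrimary :=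
  (MvPolynomial.isPrimary_map_C hq).comap _

lemma iInf_contractedExtension {ι : Type*} (I : ι → Ideal R) :
    ⨅ i, A.contractedExtension (I i) = A.contractedExtension (⨅ i, I i) := by
  simp only [contractedExtension, MvPolynomial.algebraMap_eq, MvPolynomial.map_C_iInf,
    Ideal.comap_iInf]

lemma contractedExtension_bot : A.contractedExtension ⊥ = ⊥ := by
  rw [contractedExtension, Ideal.map_bot]
  exact Ideal.comap_bot_of_injective A.val Subtype.val_injective

lemma contractedExtension_radical_le_radical (I : Ideal R) :
    A.contractedExtension I.radical ≤ (A.contractedExtension I).radical := by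
  unfold contractedExtension
  rw [← Ideal.comap_radical]
  exact Ideal.comap_mono (Ideal.map_radical_le _)

section Decomposition

variable {ι : Type*} {q : ι → Ideal R}

lemma iInf_contractedExtension_eq_bot (hdec : ⨅ i, q i = ⊥) :
    ⨅ i, A.contractedExtension (q i) = ⊥ := by
  rw [iInf_contractedExtension, hdec, contractedExtension_bot]

lemma exists_minimalPrimes_contractedExtension_le [Fintype ι] (hprim : ∀ i, (q i).IsPrimary)
    (hdec : ⨅ i, q i = ⊥) (P : Ideal A) [hP : P.IsPrime] :
    ∃ p ∈ minimalPrimes R, A.contractedExtension p ≤ P := by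
  obtain ⟨i, -, hi⟩ : ∃ i ∈ Finset.univ, A.contractedExtension (q i) ≤ P := by
    refine (hP.inf_le' (s := Finset.univ)).1 ?_
    rw [Finset.inf_univ_eq_iInf, A.iInf_contractedExtension_eq_bot hdec]
    exact bot_le
  have := Ideal.isPrime_radical (hprim i)
  obtain ⟨p, hp, hpq⟩ := Ideal.exists_minimalPrimes_le (bot_le : ⊥ ≤ (q i).radical)
  refine ⟨p, hp, ?_⟩
  calc A.contractedExtension p
      ≤ A.contractedExtension (q i).radical := Ideal.comap_mono (Ideal.map_mono hpq)
    _ ≤ (A.contractedExtension (q i)).radical := A.contractedExtension_radical_le_radical _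
    _ ≤ P := hP.radical_le_iff.2 hi

lemma minimalPrimes_eq_contractedExtension [Fintype ι] (hprim : ∀ i, (q i).IsPrimary)
    (hdec : ⨅ i, q i = ⊥) :
    minimalPrimes A = {P | ∃ p ∈ minimalPrimes R, P = A.contractedExtension p} := by
  ext P
  constructor
  · intro hP
    have := hP.1.1
    obtain ⟨p, hp, hpP⟩ := A.exists_minimalPrimes_contractedExtension_le hprim hdec P
    have := hp.1.1
    exact ⟨p, hp, le_antisymm (hP.2 ⟨A.isPrime_contractedExtension p, bot_le⟩ hpP) hpP⟩
  · rintro ⟨p, hp, rfl⟩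
    have := hp.1.1
    refine ⟨⟨A.isPrime_contractedExtension p, bot_le⟩, fun P ⟨hP, _⟩ hPp => ?_⟩
    obtain ⟨p', hp', hp'P⟩ := A.exists_minimalPrimes_contractedExtension_le hprim hdec P
    have hp'p : p' ≤ p := by
      simpa only [comap_algebraMap_contractedExtension] using
        Ideal.comap_mono (f := algebraMap R A) (hp'P.trans hPp)
    rwa [← le_antisymm (hp.2 hp'.1 hp'p) hp'p] at hp'P

lemma injective_radical_contractedExtension (hrad : Function.Injective fun i => (q i).radical) :
    Function.Injective fun i => (A.contractedExtension (q i)).radical := by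
  intro i j hij
  apply hrad
  simpa only [Ideal.comap_radical, comap_algebraMap_contractedExtension] using
    congrArg (Ideal.comap (algebraMap R A)) hij

lemma not_iInf_ne_contractedExtension_le {i : ι} (hirr : ¬ ⨅ j ∈ {j | j ≠ i}, q j ≤ q i) :
    ¬ ⨅ j ∈ {j | j ≠ i}, A.contractedExtension (q j) ≤ A.contractedExtension (q i) := by
  intro h
  apply hirr
  simpa only [Ideal.comap_iInf, comap_algebraMap_contractedExtension] using
    Ideal.comap_mono (f := algebraMap R A) h

end Decomposition

end Subalgebra

theorem stmt1_general (R : Type*) [CommRing R] (e : ℕ)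
    (E : Submodule R (Fin e → R)) (s : ℕ) (q : Fin s → Ideal R)
    (hprim : ∀ i, (q i).IsPrimary)
    (hdec : ⨅ i, q i = ⊥)
    (hrad : Function.Injective fun i => (q i).radical)
    (hirr : ∀ i, ¬ (⨅ j ∈ {j | j ≠ i}, q j) ≤ q i) :
    (∀ i, (Ideal.comap (ReesAlg E).val
        (Ideal.map (algebraMap R (MvPolynomial (Fin e) R)) (q i))).IsPrimary) ∧
    (⨅ i, Ideal.comap (ReesAlg E).val
        (Ideal.map (algebraMap R (MvPolynomial (Fin e) R)) (q i)) = ⊥) ∧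
    (Function.Injective fun i => (Ideal.comap (ReesAlg E).val
        (Ideal.map (algebraMap R (MvPolynomial (Fin e) R)) (q i))).radical) ∧
    (∀ i, ¬ (⨅ j ∈ {j | j ≠ i}, Ideal.comap (ReesAlg E).val
          (Ideal.map (algebraMap R (MvPolynomial (Fin e) R)) (q j))) ≤
        Ideal.comap (ReesAlg E).val
          (Ideal.map (algebraMap R (MvPolynomial (Fin e) R)) (q i))) ∧
    minimalPrimes ↥(ReesAlg E) =
      { P | ∃ p ∈ minimalPrimes R, P = Ideal.comap (ReesAlg E).val
          (Ideal.map (algebraMap R (MvPolynomial (Fin e) R)) p) } :=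
  ⟨fun i => (ReesAlg E).isPrimary_contractedExtension (hprim i),
    (ReesAlg E).iInf_contractedExtension_eq_bot hdec,
    (ReesAlg E).injective_radical_contractedExtension hrad,
    fun i => (ReesAlg E).not_iInf_ne_contractedExtension_le (hirr i),
    (ReesAlg E).minimalPrimes_eq_contractedExtension hprim hdec⟩

theorem stmt1 (R : Type*) [CommRing R] [IsNoetherianRing R] (e : ℕ) (he : 0 < e)
    (E : Submodule R (Fin e → R)) (s : ℕ) (q : Fin s → Ideal R)
    (hprim : ∀ i, (q i).IsPrimary)
    (hdec : ⨅ i, q i = ⊥)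
    (hrad : Function.Injective fun i => (q i).radical)
    (hirr : ∀ i, ¬ (⨅ j ∈ {j | j ≠ i}, q j) ≤ q i) :
    (∀ i, (Ideal.comap (ReesAlg E).val
        (Ideal.map (algebraMap R (MvPolynomial (Fin e) R)) (q i))).IsPrimary) ∧
    (⨅ i, Ideal.comap (ReesAlg E).val
        (Ideal.map (algebraMap R (MvPolynomial (Fin e) R)) (q i)) = ⊥) ∧
    (Function.Injective fun i => (Ideal.comap (ReesAlg E).val
        (Ideal.map (algebraMap R (MvPolynomial (Fin e) R)) (q i))).radical) ∧
    (∀ i, ¬ (⨅ j ∈ {j | j ≠ i}, Ideal.comap (ReesAlg E).val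
          (Ideal.map (algebraMap R (MvPolynomial (Fin e) R)) (q j))) ≤
        Ideal.comap (ReesAlg E).val
          (Ideal.map (algebraMap R (MvPolynomial (Fin e) R)) (q i))) ∧
    minimalPrimes ↥(ReesAlg E) =
      { P | ∃ p ∈ minimalPrimes R, P = Ideal.comap (ReesAlg E).val
          (Ideal.map (algebraMap R (MvPolynomial (Fin e) R)) p) } :=
  stmt1_general R e E s q hprim hdec hrad hirr

end
end

section
/- Let R be a Noetherian commutative ring, G ≅ R^e free of rank e > 0, E ⊆ G an R-submodule, and p a prime ideal of R. Set P = p·S_R(G) ∩ R_G(E). Then there is an isomorphism of graded rings R_G(E)/P ≅ R_{G̅}(E̅), where R̅ = R/p, G̅ = G/pG, and E̅ = (E + pG)/pG ⊆ G̅. -/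
/-! Reducing coefficients modulo `p` is a surjective map `S_R(G) → S_{R̅}(G̅)` with kernel
`p·S_R(G)`. It sends the linear forms of `E` onto those of `E̅`, hence maps `R_G(E)` onto
`R_{G̅}(E̅)`, and the first isomorphism theorem for its restriction to `R_G(E)` gives the
isomorphism. -/

open IsLocalRing

noncomputable section

theorem Algebra.restrictScalars_adjoin_of_surjective {R S A : Type*} [CommSemiring R]
    [CommSemiring S] [Semiring A] [Algebra R S] [Algebra S A] [Algebra R A]
    [IsScalarTower R S A] (h : Function.Surjective (algebraMap R S)) (s : Set A) :
    (Algebra.adjoin S s).restrictScalars R = Algebra.adjoin R s := by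
  rw [Subalgebra.restrictScalars_adjoin, sup_eq_right]
  rintro _ ⟨x, rfl⟩
  obtain ⟨r, rfl⟩ := h x
  have hr := Subalgebra.algebraMap_mem (Algebra.adjoin R s) r
  rwa [IsScalarTower.algebraMap_apply R S A] at hr

theorem Subalgebra.surjective_codRestrict_map {R A B : Type*} [CommSemiring R] [Semiring A]
    [Semiring B] [Algebra R A] [Algebra R B] (S : Subalgebra R A) (φ : A →ₐ[R] B) :
    Function.Surjective ((φ.comp S.val).codRestrict (S.map φ) fun x => ⟨x, x.2, rfl⟩) := by
  rintro ⟨_, x, hx, rfl⟩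
  exact ⟨⟨x, hx⟩, rfl⟩

def Subalgebra.quotientComapKerEquivMap {R A B : Type*} [CommRing R]
    [CommRing A] [Semiring B] [Algebra R A] [Algebra R B] (S : Subalgebra R A) (φ : A →ₐ[R] B) :
    (S ⧸ (RingHom.ker φ).comap S.val) ≃ₐ[R] S.map φ :=
  (Ideal.quotientEquivAlgOfEq R <| by
    ext x
    rw [Ideal.mem_comap, RingHom.mem_ker, RingHom.mem_ker, Subtype.ext_iff]
    rfl).trans
    (Ideal.quotientKerAlgEquivOfSurjective (S.surjective_codRestrict_map φ))

theorem MvPolynomial.map_emb {R S : Type*} [CommRing R] [CommRing S] (f : R →+* S) {e : ℕ}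
    (v : Fin e → R) : MvPolynomial.map f (emb R e v) = emb S e (f ∘ v) := by
  simp [emb, MvPolynomial.smul_eq_C_mul]

theorem MvPolynomial.ker_mapAlgHom_mkₐ {R : Type*} [CommRing R] (σ : Type*) (I : Ideal R) :
    RingHom.ker (MvPolynomial.mapAlgHom (σ := σ) (Ideal.Quotient.mkₐ R I)) =
      I.map (algebraMap R (MvPolynomial σ R)) := by
  rw [MvPolynomial.algebraMap_eq]
  exact (MvPolynomial.ker_map (Ideal.Quotient.mk I)).trans (by rw [Ideal.mk_ker])

theorem reesAlg_map_quotient {R : Type*} [CommRing R] {e : ℕ} (I : Ideal R)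
    (E : Submodule R (Fin e → R)) :
    (ReesAlg E).map (MvPolynomial.mapAlgHom (Ideal.Quotient.mkₐ R I)) =
      (ReesAlg (pushE I E)).restrictScalars R := by
  rw [ReesAlg, ReesAlg, pushE, AlgHom.map_adjoin, Submodule.map_span, Algebra.adjoin_span,
    Algebra.restrictScalars_adjoin_of_surjective Ideal.Quotient.mk_surjective,
    Submodule.map_coe, ← Set.image_comp, ← Set.image_comp]
  congr 1
  exact Set.image_congr fun v _ => MvPolynomial.map_emb _ v

theorem stmt2_general (R : Type*) [CommRing R] (e : ℕ)
    (E : Submodule R (Fin e → R)) (p : Ideal R) :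
    Nonempty ((↥(ReesAlg E) ⧸ Ideal.comap (ReesAlg E).val
        (Ideal.map (algebraMap R (MvPolynomial (Fin e) R)) p)) ≃+*
      ↥(ReesAlg (pushE p E))) := by
  rw [← MvPolynomial.ker_mapAlgHom_mkₐ]
  exact ⟨(((ReesAlg E).quotientComapKerEquivMap _).trans
    (Subalgebra.equivOfEq _ _ (reesAlg_map_quotient p E))).toRingEquiv⟩

theorem stmt2 (R : Type*) [CommRing R] [IsNoetherianRing R] (e : ℕ) (he : 0 < e)
    (E : Submodule R (Fin e → R)) (p : Ideal R) [p.IsPrime] :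
    Nonempty ((↥(ReesAlg E) ⧸ Ideal.comap (ReesAlg E).val
        (Ideal.map (algebraMap R (MvPolynomial (Fin e) R)) p)) ≃+*
      ↥(ReesAlg (pushE p E))) :=
  stmt2_general R e E p

end
end

section
/- Let (R, m) be a Noetherian local ring with dim R > 0, G ≅ R^e free of rank e > 0, E ⊊ G an R-submodule, and let m·R_G(E) denote the extension of m to the Rees algebra. Then m·R_G(E) is not contained in any minimal prime of R_G(E); equivalently, ht(m·R_G(E)) > 0, and hence dim(R_G(E)/m·R_G(E)) < dim R_G(E). -/
open IsLocalRing

noncomputable section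

/-- The height of an ideal: the infimum of the heights of the primes containing it. -/
def idealHeight {A : Type*} [CommRing A] (I : Ideal A) : ℕ∞ :=
  ⨅ (p : PrimeSpectrum A) (_ : I ≤ p.asIdeal), Order.height p

/-!
Every minimal prime of an `R`-subalgebra `A ⊆ R[X₁, …, Xₑ]` has the form `A ∩ q·R[X]` with `q`
a minimal prime of `R`: these ideals are prime, finitely many as `R` is Noetherian, and their
intersection consists of polynomials with nilpotent coefficients. Such a prime contracts to `q`
in `R`, so if it contained `m·A`, then `m = q` would be a minimal prime of `R`, forcing
`dim R = 0`. Hence `m·A` lies in no minimal prime of `A`: it has positive height, and every chain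
of primes containing `m·A` extends downwards by one step. Since the Rees algebra is of finite type
over `R`, its dimension is finite, so this gives `dim R_G(E)/m·R_G(E) < dim R_G(E)`.
-/

open MvPolynomial

theorem WithBot.ENat.lt_of_add_one_le {a b : WithBot ℕ∞} (h : a + 1 ≤ b) (hb : b ≠ ⊥)
    (hb' : b ≠ ⊤) : a < b := by
  induction a using WithBot.recBotCoe with
  | bot => exact bot_lt_iff_ne_bot.mpr hb
  | coe d =>
    induction b using WithBot.recBotCoe with
    | bot => exact absurd rfl hb
    | coe c =>
      rw [← WithBot.coe_one, ← WithBot.coe_add, WithBot.coe_le_coe] at h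
      rw [Ne, WithBot.coe_eq_top] at hb'
      have hd : d ≠ ⊤ := ne_top_of_le_ne_top hb' (le_self_add.trans h)
      exact WithBot.coe_lt_coe.mpr (((ENat.lt_add_one_iff hd).mpr le_rfl).trans_le h)

theorem WithBot.ENat.add_natCast_ne_top {a : WithBot ℕ∞} (ha : a ≠ ⊤) (n : ℕ) : a + n ≠ ⊤ := by
  induction a using WithBot.recBotCoe with
  | bot => simp
  | coe d =>
    rw [← WithBot.coe_natCast, ← WithBot.coe_add]
    rw [Ne, WithBot.coe_eq_top] at ha ⊢
    exact WithTop.add_ne_top.mpr ⟨ha, ENat.natCast_ne_top n⟩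

section MinimalPrimes

variable {A : Type*} [CommRing A] {I : Ideal A}

theorem idealHeight_pos_of_forall_minimalPrimes_not_le (h : ∀ P ∈ minimalPrimes A, ¬ I ≤ P) :
    0 < idealHeight I := by
  refine zero_lt_one.trans_le (le_iInf₂ fun p hp => ?_)
  rw [Order.one_le_iff_ne_zero, Ne, Order.height_eq_zero, PrimeSpectrum.isMin_iff]
  exact fun hmin => h _ hmin hp

/-- As in `ringKrullDim_quotient_succ_le_of_nonZeroDivisor`: the first prime of a chain over `I`
is not minimal, so a minimal prime below it can be prepended. -/
theorem ringKrullDim_quotient_succ_le_of_forall_minimalPrimes_not_le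
    (h : ∀ P ∈ minimalPrimes A, ¬ I ≤ P) : ringKrullDim (A ⧸ I) + 1 ≤ ringKrullDim A := by
  by_cases hI : I = ⊤
  · rw [hI, ringKrullDim_eq_bot_of_subsingleton]
    simp
  have : Nonempty (PrimeSpectrum.zeroLocus (R := A) I) := by
    rwa [Set.nonempty_coe_sort, Set.nonempty_iff_ne_empty, ne_eq,
      PrimeSpectrum.zeroLocus_empty_iff_eq_top]
  have := Ideal.Quotient.nontrivial_iff.mpr hI
  have := (Ideal.Quotient.mk I).domain_nontrivial
  rw [ringKrullDim_quotient, Order.krullDim_eq_iSup_length, ringKrullDim,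
    Order.krullDim_eq_iSup_length, ← WithBot.coe_one, ← WithBot.coe_add,
    ENat.iSup_add, WithBot.coe_le_coe, iSup_le_iff]
  intro l
  obtain ⟨p, hp, hpl⟩ := Ideal.exists_minimalPrimes_le (J := l.head.1.asIdeal) bot_le
  have hlt : (⟨p, hp.isPrime⟩ : PrimeSpectrum A) < l.head :=
    lt_of_le_of_ne hpl fun heq => h p hp (by simpa [← heq] using l.head.2)
  let l' : LTSeries (PrimeSpectrum A) := (l.map Subtype.val (Subtype.strictMono_coe _)).cons _ hlt
  have hlen : l'.length = l.length + 1 := RelSeries.cons_length _ _ _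
  refine le_trans ?_ (le_iSup _ l')
  rw [hlen, Nat.cast_succ]

theorem ringKrullDim_quotient_lt_of_forall_minimalPrimes_not_le [FiniteRingKrullDim A]
    (h : ∀ P ∈ minimalPrimes A, ¬ I ≤ P) : ringKrullDim (A ⧸ I) < ringKrullDim A :=
  WithBot.ENat.lt_of_add_one_le (ringKrullDim_quotient_succ_le_of_forall_minimalPrimes_not_le h)
    ringKrullDim_ne_bot ringKrullDim_ne_top

end MinimalPrimes

theorem Submodule.FG.finiteType_adjoin {R S : Type*} [CommRing R] [CommRing S] [Algebra R S]
    {M : Submodule R S} (hM : M.FG) : Algebra.FiniteType R (Algebra.adjoin R (M : Set S)) := by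
  obtain ⟨s, rfl⟩ := hM
  exact (Subalgebra.fg_iff_finiteType _).mp ⟨s, (Algebra.adjoin_span (R := R)).symm⟩

theorem Algebra.FiniteType.finiteRingKrullDim (R : Type*) {S : Type*} [CommRing R] [CommRing S]
    [Algebra R S] [IsNoetherianRing R] [FiniteRingKrullDim R] [Nontrivial S]
    [Algebra.FiniteType R S] : FiniteRingKrullDim S := by
  obtain ⟨n, f, hf⟩ := Algebra.FiniteType.iff_quotient_mvPolynomial''.mp ‹_›
  refine finiteRingKrullDim_iff_ne_bot_and_top.mpr
    ⟨ne_bot_of_le_ne_bot WithBot.coe_ne_bot ringKrullDim_nonneg_of_nontrivial, ?_⟩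
  refine ne_top_of_le_ne_top ?_ (ringKrullDim_le_of_surjective f.toRingHom hf)
  rw [MvPolynomial.ringKrullDim_of_isNoetherianRing]
  exact WithBot.ENat.add_natCast_ne_top ringKrullDim_ne_top _

theorem MvPolynomial.isPrime_map_C_s5 {R σ : Type*} [CommRing R] (p : Ideal R) [p.IsPrime] :
    (p.map (C : R →+* MvPolynomial σ R)).IsPrime := by
  rw [← Ideal.mk_ker (I := p), ← ker_map]
  exact RingHom.ker_isPrime _

section Subalgebra

variable {R σ : Type*} [CommRing R] (A : Subalgebra R (MvPolynomial σ R))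

/-- For the Rees algebra this is `p·S_R(G) ∩ R_G(E)`. -/
def contractedExtension (p : Ideal R) : Ideal A := (p.map C).comap A.val

variable {A}

theorem mem_contractedExtension {p : Ideal R} {x : A} :
    x ∈ contractedExtension A p ↔ ∀ m, (x : MvPolynomial σ R).coeff m ∈ p :=
  Ideal.mem_comap.trans mem_map_C_iff

instance (p : Ideal R) [p.IsPrime] : (contractedExtension A p).IsPrime :=
  have := MvPolynomial.isPrime_map_C_s5 (σ := σ) p
  Ideal.comap_isPrime _ _

theorem comap_algebraMap_contractedExtension (p : Ideal R) :
    (contractedExtension A p).comap (algebraMap R A) = p := by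
  classical
  ext r
  rw [Ideal.mem_comap, mem_contractedExtension]
  refine ⟨fun h => by simpa using h 0, fun hr m => ?_⟩
  change (C r : MvPolynomial σ R).coeff m ∈ p
  rw [coeff_C]
  split_ifs
  · exact hr
  · exact p.zero_mem

theorem exists_mem_minimalPrimes_contractedExtension_le (hfin : (minimalPrimes R).Finite)
    (P : Ideal A) [hP : P.IsPrime] : ∃ q ∈ minimalPrimes R, contractedExtension A q ≤ P := by
  simp only [← hfin.mem_toFinset]
  refine hP.inf_le'.mp fun x hx => ?_
  have hcoeff : ∀ m, IsNilpotent ((x : MvPolynomial σ R).coeff m) := fun m => by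
    rw [← mem_nilradical, nilradical, ← Ideal.sInf_minimalPrimes, Ideal.mem_sInf]
    intro q hq
    exact mem_contractedExtension.mp
      (Finset.inf_le (f := contractedExtension A) (hfin.mem_toFinset.mpr hq) hx) m
  obtain ⟨n, hn⟩ :=
    (IsNilpotent.map_iff (f := A.val) Subtype.val_injective).mp (isNilpotent_iff.mpr hcoeff)
  exact hP.mem_of_pow_mem n (hn ▸ P.zero_mem)

theorem exists_eq_contractedExtension_of_mem_minimalPrimes (hfin : (minimalPrimes R).Finite)
    {P : Ideal A} (hP : P ∈ minimalPrimes A) :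
    ∃ q ∈ minimalPrimes R, P = contractedExtension A q := by
  have := hP.1.1
  obtain ⟨q, hq, hle⟩ := exists_mem_minimalPrimes_contractedExtension_le hfin P
  have := hq.1.1
  exact ⟨q, hq, le_antisymm (hP.2 ⟨inferInstance, bot_le⟩ hle) hle⟩

end Subalgebra

theorem IsLocalRing.maximalIdeal_notMem_minimalPrimes {R : Type*} [CommRing R] [IsLocalRing R]
    (hdim : 0 < ringKrullDim R) : maximalIdeal R ∉ minimalPrimes R := by
  intro hmin
  have := congrArg ((↑) : ℕ∞ → WithBot ℕ∞) (Ideal.height_eq_zero_iff.mpr hmin)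
  rw [maximalIdeal_height_eq_ringKrullDim] at this
  exact hdim.ne' this

theorem IsLocalRing.map_maximalIdeal_not_le_of_mem_minimalPrimes {R σ : Type*} [CommRing R]
    [IsNoetherianRing R] [IsLocalRing R] (hdim : 0 < ringKrullDim R)
    {A : Subalgebra R (MvPolynomial σ R)} {P : Ideal A} (hP : P ∈ minimalPrimes A) :
    ¬ (maximalIdeal R).map (algebraMap R A) ≤ P := by
  obtain ⟨q, hq, rfl⟩ := exists_eq_contractedExtension_of_mem_minimalPrimes
    (minimalPrimes.finite_of_isNoetherianRing R) hP
  rw [Ideal.map_le_iff_le_comap, comap_algebraMap_contractedExtension]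
  intro hmq
  have hqm : q = maximalIdeal R := le_antisymm (le_maximalIdeal hq.1.1.ne_top) hmq
  exact maximalIdeal_notMem_minimalPrimes hdim (hqm ▸ hq)

theorem stmt5_general (R : Type*) [CommRing R] [IsNoetherianRing R] [IsLocalRing R]
    (e : ℕ) (E : Submodule R (Fin e → R))
    (hdim : (0 : WithBot ℕ∞) < ringKrullDim R) :
    (∀ P ∈ minimalPrimes ↥(ReesAlg E), ¬ fibIdeal R E ≤ P) ∧
    0 < idealHeight (fibIdeal R E) ∧
    aSpread R E < ringKrullDim ↥(ReesAlg E) := by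
  have hfib : ∀ P ∈ minimalPrimes ↥(ReesAlg E), ¬ fibIdeal R E ≤ P := fun _ hP =>
    map_maximalIdeal_not_le_of_mem_minimalPrimes hdim hP
  have : Algebra.FiniteType R (ReesAlg E) :=
    ((IsNoetherian.noetherian E).map (emb R e)).finiteType_adjoin
  have : FiniteRingKrullDim (ReesAlg E) := Algebra.FiniteType.finiteRingKrullDim R
  exact ⟨hfib, idealHeight_pos_of_forall_minimalPrimes_not_le hfib,
    ringKrullDim_quotient_lt_of_forall_minimalPrimes_not_le hfib⟩

theorem stmt5 (R : Type*) [CommRing R] [IsNoetherianRing R] [IsLocalRing R]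
    (e : ℕ) (he : 0 < e) (E : Submodule R (Fin e → R)) (hE : E ≠ ⊤)
    (hdim : (0 : WithBot ℕ∞) < ringKrullDim R) :
    (∀ P ∈ minimalPrimes ↥(ReesAlg E), ¬ fibIdeal R E ≤ P) ∧
    0 < idealHeight (fibIdeal R E) ∧
    aSpread R E < ringKrullDim ↥(ReesAlg E) :=
  stmt5_general R e E hdim

end
end

section
/- Let (R, m) be a Noetherian local ring with dim R > 0, G ≅ R^e free of rank e > 0, and E ⊊ G an R-submodule. If a ∈ m is a nonzerodivisor on G_n/E_n for every n ≥ 1, then: (1) aG_n ∩ E_n = aE_n ⊆ m·E_n for all n ≥ 1; (2) R_{G̅}(E̅) ≅ R_G(E)/a·R_G(E) as graded rings, where G̅ = G/aG, E̅ = (E+aG)/aG; (3) F_{G̅}(E̅) ≅ F_G(E) as graded rings. -/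
open IsLocalRing

noncomputable section

/-!
Reducing coefficients modulo `a` maps `R_G(E)` onto `R_{G̅}(E̅)`, because `E̅` is the image of
`E`. An element of the kernel has all its coefficients in `(a)`, so its component of degree `n`
lies in `aG_n ∩ E_n`, which is `aE_n` because `a` is regular on `G_n/E_n`; hence the kernel is
`a·R_G(E)`. As `a ∈ m`, reducing further modulo `m` identifies the two fiber cones.
-/

open MvPolynomial

theorem Algebra.coe_adjoin_eq_of_surjective {R S A : Type*} [CommSemiring R] [CommSemiring S]
    [Semiring A] [Algebra R S] [Algebra S A] [Algebra R A] [IsScalarTower R S A]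
    (h : Function.Surjective (algebraMap R S)) (s : Set A) :
    (Algebra.adjoin S s : Set A) = Algebra.adjoin R s := by
  rw [← Subalgebra.coe_toSubmodule, Algebra.adjoin_eq_span,
    Submodule.coe_span_eq_span_of_surjective R S h, ← Algebra.adjoin_eq_span,
    Subalgebra.coe_toSubmodule]

theorem Submodule.span_singleton_smul_inf_eq_of_isSMulRegular {R M : Type*} [CommRing R]
    [AddCommGroup M] [Module R M] {P Q : Submodule R M} (hPQ : P ≤ Q) {a : R}
    (ha : IsSMulRegular (Q ⧸ P.comap Q.subtype) a) :
    Ideal.span {a} • Q ⊓ P = Ideal.span {a} • P := by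
  refine le_antisymm ?_ (le_inf (smul_mono_right _ hPQ) Submodule.smul_le_right)
  rintro _ ⟨hx, hxP⟩
  rw [Submodule.ideal_span_singleton_smul] at hx ⊢
  obtain ⟨q, hq, rfl⟩ := Set.mem_smul_set.mp hx
  have : Submodule.Quotient.mk (p := P.comap Q.subtype) ⟨q, hq⟩ = 0 := ha <| by
    change a • _ = a • 0
    rwa [smul_zero, ← Submodule.Quotient.mk_smul, Submodule.Quotient.mk_eq_zero]
  rw [Submodule.Quotient.mk_eq_zero] at this
  exact Set.smul_mem_smul_set this

theorem Subalgebra.mem_map_algebraMap_of_coe_mem_smul {R A : Type*} [CommRing R] [CommRing A]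
    [Algebra R A] {S : Subalgebra R A} {I : Ideal R} {x : S}
    (hx : (x : A) ∈ I • Subalgebra.toSubmodule S) : x ∈ I.map (algebraMap R S) := by
  have hS : Subalgebra.toSubmodule S = (⊤ : Submodule R S).map S.val.toLinearMap := by
    ext; simp
  rw [hS, ← Submodule.map_smul''] at hx
  obtain ⟨y, hy, hyx⟩ := hx
  rw [Ideal.smul_top_eq_map] at hy
  exact Subtype.ext hyx ▸ hy

def Ideal.quotientMapEquivOfSurjective {A B : Type*} [CommRing A] [CommRing B] {f : A →+* B}
    (hf : Function.Surjective f) {K : Ideal A} (hK : RingHom.ker f ≤ K) :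
    B ⧸ K.map f ≃+* A ⧸ K :=
  have hker : RingHom.ker ((Ideal.Quotient.mk (K.map f)).comp f) = K := by
    rw [← RingHom.comap_ker, Ideal.mk_ker, Ideal.comap_map_of_surjective _ hf,
      ← RingHom.ker_eq_comap_bot, sup_eq_left.mpr hK]
  ((Ideal.quotEquivOfEq hker.symm).trans
    (RingHom.quotientKerEquivOfSurjective (Ideal.Quotient.mk_surjective.comp hf))).symm

section ReesPower

variable {R : Type*} [CommRing R] {e : ℕ}

lemma emb_apply (v : Fin e → R) : emb R e v = ∑ i, v i • X i := rfl

lemma reesPow_zero (E : Submodule R (Fin e → R)) : reesPow E 0 = 1 := pow_zero _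

lemma reesPow_succ (E : Submodule R (Fin e → R)) (n : ℕ) :
    reesPow E (n + 1) = reesPow E n * E.map (emb R e) := pow_succ _ _

lemma reesPow_mono {E F : Submodule R (Fin e → R)} (h : E ≤ F) (n : ℕ) :
    reesPow E n ≤ reesPow F n :=
  pow_le_pow_left' (Submodule.map_mono h) n

lemma map_emb_le_homogeneousSubmodule (E : Submodule R (Fin e → R)) :
    E.map (emb R e) ≤ homogeneousSubmodule (Fin e) R 1 := by
  rintro _ ⟨v, -, rfl⟩
  exact Submodule.sum_mem _ fun i _ =>
    Submodule.smul_mem _ _ ((mem_homogeneousSubmodule _ _).mpr (isHomogeneous_X R i))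

lemma reesPow_le_homogeneousSubmodule (E : Submodule R (Fin e → R)) (n : ℕ) :
    reesPow E n ≤ homogeneousSubmodule (Fin e) R n := by
  induction n with
  | zero =>
    rw [reesPow_zero, Submodule.one_le]
    exact isHomogeneous_one (Fin e) R
  | succ n ih =>
    rw [reesPow_succ]
    exact (mul_le_mul' ih (map_emb_le_homogeneousSubmodule E)).trans
      (homogeneousSubmodule_mul n 1)

lemma reesPow_le_reesAlg (E : Submodule R (Fin e → R)) (n : ℕ) :
    reesPow E n ≤ Subalgebra.toSubmodule (ReesAlg E) := by
  induction n with
  | zero => exact Submodule.one_le.mpr (ReesAlg E).one_mem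
  | succ n ih =>
    rw [reesPow_succ]
    exact Submodule.mul_le.mpr fun x hx y hy =>
      (ReesAlg E).mul_mem (ih hx) (Algebra.subset_adjoin hy)

lemma homogeneousComponent_mem_reesPow_of_mem_reesPow {E : Submodule R (Fin e → R)} {k : ℕ}
    {x : MvPolynomial (Fin e) R} (hx : x ∈ reesPow E k) (n : ℕ) :
    homogeneousComponent n x ∈ reesPow E n := by
  rw [homogeneousComponent_of_mem (reesPow_le_homogeneousSubmodule E k hx)]
  split_ifs with h
  · exact h ▸ hx
  · exact zero_mem _

lemma homogeneousComponent_mem_reesPow {E : Submodule R (Fin e → R)}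
    {x : MvPolynomial (Fin e) R} (hx : x ∈ ReesAlg E) (n : ℕ) :
    homogeneousComponent n x ∈ reesPow E n := by
  rw [← SetLike.mem_coe, ← Subalgebra.coe_toSubmodule, ReesAlg, Algebra.adjoin_eq_span] at hx
  induction hx using Submodule.span_induction with
  | mem y hy =>
    obtain ⟨k, hk⟩ : ∃ k, y ∈ reesPow E k := by
      induction hy using Submonoid.closure_induction with
      | mem y hy => exact ⟨1, by rwa [reesPow, pow_one]⟩
      | one => exact ⟨0, by rw [reesPow_zero]; exact Submodule.one_le.mp le_rfl⟩
      | mul y z _ _ hy hz =>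
        obtain ⟨k, hk⟩ := hy
        obtain ⟨l, hl⟩ := hz
        exact ⟨k + l, by rw [reesPow, pow_add]; exact Submodule.mul_mem_mul hk hl⟩
    exact homogeneousComponent_mem_reesPow_of_mem_reesPow hk n
  | zero => simp
  | add y z _ _ hy hz => rw [map_add]; exact add_mem hy hz
  | smul r y _ hy => rw [map_smul]; exact Submodule.smul_mem _ r hy

lemma monomial_mem_reesPow_top (d : Fin e →₀ ℕ) (r : R) :
    monomial d r ∈ reesPow (⊤ : Submodule R (Fin e → R)) d.degree := by
  induction d using Finsupp.induction generalizing r with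
  | zero => exact Submodule.mem_one.mpr ⟨r, by simp [algebraMap_eq]⟩
  | single_add i b d _ _ ih =>
    have hX : (X i : MvPolynomial (Fin e) R) ∈ (⊤ : Submodule R (Fin e → R)).map (emb R e) :=
      ⟨Pi.single i 1, trivial, by simp [emb_apply, Pi.single_apply]⟩
    rw [map_add, Finsupp.degree_single, reesPow, pow_add, ← one_mul r, ← monomial_mul,
      ← X_pow_eq_monomial]
    exact Submodule.mul_mem_mul (Submodule.pow_mem_pow _ hX b) (ih r)

lemma homogeneousComponent_mem_smul_reesPow_top {I : Ideal R} {x : MvPolynomial (Fin e) R}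
    (hx : ∀ d, coeff d x ∈ I) (n : ℕ) :
    homogeneousComponent n x ∈ I • reesPow (⊤ : Submodule R (Fin e → R)) n := by
  rw [homogeneousComponent_apply]
  refine Submodule.sum_mem _ fun d hd => ?_
  obtain ⟨-, hdeg⟩ := Finset.mem_filter.mp hd
  rw [← mul_one (coeff d x), ← smul_eq_mul, ← smul_monomial, ← hdeg]
  exact Submodule.smul_mem_smul (hx d) (monomial_mem_reesPow_top d 1)

lemma map_emb (I : Ideal R) (v : Fin e → R) :
    map (Ideal.Quotient.mk I) (emb R e v) =
      emb (R ⧸ I) e (fun i => Ideal.Quotient.mk I (v i)) := by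
  simp [emb_apply, smul_eq_C_mul]

lemma coe_reesAlg_pushE (I : Ideal R) (E : Submodule R (Fin e → R)) :
    (ReesAlg (pushE I E) : Set (MvPolynomial (Fin e) (R ⧸ I))) =
      mapAlgHom (Ideal.Quotient.mkₐ R I) '' ReesAlg E := by
  have hsurj : Function.Surjective (algebraMap R (R ⧸ I)) := Ideal.Quotient.mk_surjective
  rw [ReesAlg, Algebra.coe_adjoin_eq_of_surjective hsurj, Submodule.map_coe, pushE,
    Submodule.coe_span_eq_span_of_surjective R _ hsurj]
  set X := (fun v i => Ideal.Quotient.mk I (v i)) '' (E : Set (Fin e → R))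
  have himage : emb (R ⧸ I) e '' Submodule.span R X = Submodule.span R (emb (R ⧸ I) e '' X) :=
    (Submodule.map_coe ((emb (R ⧸ I) e).restrictScalars R) _).symm.trans
      (congrArg SetLike.coe (Submodule.span_image _).symm)
  rw [himage, Algebra.adjoin_span, Set.image_image, ReesAlg, ← Subalgebra.coe_map,
    AlgHom.map_adjoin, Submodule.map_coe, Set.image_image]
  congr 3
  funext v
  exact (map_emb I v).symm

end ReesPower

namespace ReesAlg

variable {R : Type*} [CommRing R] {e : ℕ} (I : Ideal R) (E : Submodule R (Fin e → R))

def reduction : ReesAlg E →+* ReesAlg (pushE I E) :=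
  RingHom.codRestrict ((map (Ideal.Quotient.mk I)).comp (ReesAlg E).val.toRingHom) _ fun x => by
    rw [← SetLike.mem_coe, coe_reesAlg_pushE]
    exact Set.mem_image_of_mem _ x.2

lemma coe_reduction (x : ReesAlg E) :
    (reduction I E x : MvPolynomial (Fin e) (R ⧸ I)) = map (Ideal.Quotient.mk I) x := rfl

lemma reduction_surjective : Function.Surjective (reduction I E) := by
  rintro ⟨w, hw⟩
  rw [← SetLike.mem_coe, coe_reesAlg_pushE] at hw
  obtain ⟨x, hx, rfl⟩ := hw
  exact ⟨⟨x, hx⟩, rfl⟩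

lemma reduction_comp_algebraMap :
    (reduction I E).comp (algebraMap R (ReesAlg E)) =
      (algebraMap (R ⧸ I) (ReesAlg (pushE I E))).comp (Ideal.Quotient.mk I) := by
  ext r
  simp [coe_reduction, algebraMap_eq]

variable {I E} in
lemma ker_reduction
    (hinf : ∀ n ≥ 1,
      I • reesPow (⊤ : Submodule R (Fin e → R)) n ⊓ reesPow E n ≤ I • reesPow E n) :
    RingHom.ker (reduction I E) = I.map (algebraMap R (ReesAlg E)) := by
  refine le_antisymm (fun x hx => ?_) ?_
  · have hcoeff : ∀ d, coeff d (x : MvPolynomial (Fin e) R) ∈ I := fun d => by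
      rw [← Ideal.Quotient.eq_zero_iff_mem, ← coeff_map, ← coe_reduction, hx,
        ZeroMemClass.coe_zero, coeff_zero]
    refine Subalgebra.mem_map_algebraMap_of_coe_mem_smul ?_
    rw [← sum_homogeneousComponent (x : MvPolynomial (Fin e) R)]
    refine Submodule.sum_mem _ fun n _ => smul_mono_right _ (reesPow_le_reesAlg E n) ?_
    have hG := homogeneousComponent_mem_smul_reesPow_top hcoeff n
    rcases n.eq_zero_or_pos with rfl | hn
    · rwa [reesPow_zero] at hG ⊢
    · exact hinf n hn ⟨hG, homogeneousComponent_mem_reesPow x.2 n⟩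
  · refine Ideal.map_le_iff_le_comap.mpr fun r hr => ?_
    rw [Ideal.mem_comap, RingHom.mem_ker, ← RingHom.comp_apply, reduction_comp_algebraMap,
      RingHom.comp_apply, Ideal.Quotient.eq_zero_iff_mem.mpr hr, map_zero]

end ReesAlg

theorem stmt12_general (R : Type*) [CommRing R] [IsLocalRing R]
    (e : ℕ) (E : Submodule R (Fin e → R))
    (a : R) (ha : a ∈ maximalIdeal R)
    (hreg : ∀ n ≥ 1, IsSMulRegular (GmodE E n) a) :
    (∀ n ≥ 1,
      Ideal.span {a} • reesPow (⊤ : Submodule R (Fin e → R)) n ⊓ reesPow E n =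
        Ideal.span {a} • reesPow E n ∧
      Ideal.span {a} • reesPow E n ≤ maximalIdeal R • reesPow E n) ∧
    Nonempty (↥(ReesAlg (pushE (Ideal.span {a}) E)) ≃+*
      (↥(ReesAlg E) ⧸ Ideal.map (algebraMap R ↥(ReesAlg E)) (Ideal.span {a}))) ∧
    Nonempty ((↥(ReesAlg (pushE (Ideal.span {a}) E)) ⧸
        Ideal.map (algebraMap (R ⧸ Ideal.span {a}) ↥(ReesAlg (pushE (Ideal.span {a}) E)))
          (Ideal.map (Ideal.Quotient.mk (Ideal.span {a})) (maximalIdeal R))) ≃+*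
      (↥(ReesAlg E) ⧸ fibIdeal R E)) := by
  have hinf (n : ℕ) (hn : n ≥ 1) : Ideal.span {a} • reesPow ⊤ n ⊓ reesPow E n =
      Ideal.span {a} • reesPow E n :=
    Submodule.span_singleton_smul_inf_eq_of_isSMulRegular (reesPow_mono le_top n) (hreg n hn)
  have hle : Ideal.span {a} ≤ maximalIdeal R := (Ideal.span_singleton_le_iff_mem _).mpr ha
  have hsurj := ReesAlg.reduction_surjective (Ideal.span {a}) E
  have hker := ReesAlg.ker_reduction fun n hn => (hinf n hn).le
  refine ⟨fun n hn => ⟨hinf n hn, Submodule.smul_mono_left hle⟩, ⟨?_⟩, ⟨?_⟩⟩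
  · exact ((Ideal.quotEquivOfEq hker.symm).trans
      (RingHom.quotientKerEquivOfSurjective hsurj)).symm
  · rw [Ideal.map_map, ← ReesAlg.reduction_comp_algebraMap, ← Ideal.map_map]
    exact Ideal.quotientMapEquivOfSurjective hsurj (hker ▸ Ideal.map_mono hle)

theorem stmt12 (R : Type*) [CommRing R] [IsNoetherianRing R] [IsLocalRing R]
    (e : ℕ) (he : 0 < e) (E : Submodule R (Fin e → R)) (hE : E ≠ ⊤)
    (hdim : (0 : WithBot ℕ∞) < ringKrullDim R)
    (a : R) (ha : a ∈ maximalIdeal R)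
    (hreg : ∀ n ≥ 1, IsSMulRegular (GmodE E n) a) :
    (∀ n ≥ 1,
      Ideal.span {a} • reesPow (⊤ : Submodule R (Fin e → R)) n ⊓ reesPow E n =
        Ideal.span {a} • reesPow E n ∧
      Ideal.span {a} • reesPow E n ≤ maximalIdeal R • reesPow E n) ∧
    Nonempty (↥(ReesAlg (pushE (Ideal.span {a}) E)) ≃+*
      (↥(ReesAlg E) ⧸ Ideal.map (algebraMap R ↥(ReesAlg E)) (Ideal.span {a}))) ∧
    Nonempty ((↥(ReesAlg (pushE (Ideal.span {a}) E)) ⧸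
        Ideal.map (algebraMap (R ⧸ Ideal.span {a}) ↥(ReesAlg (pushE (Ideal.span {a}) E)))
          (Ideal.map (Ideal.Quotient.mk (Ideal.span {a})) (maximalIdeal R))) ≃+*
      (↥(ReesAlg E) ⧸ fibIdeal R E)) :=
  stmt12_general R e E a ha hreg
end
end

section
/- Let (R, m) be a Noetherian local ring, I ⊆ R an ideal, and a ∈ m a nonzerodivisor on R/I^n for all n ≥ 1. Then the Rees algebra of the image of I in R/(a) satisfies R((I+aR)/aR) ≅ R(I) ⊗_R R/aR ≅ R(I)/a·R(I), and the fiber cone satisfies F((I+aR)/aR) ≅ F(I). -/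
open IsLocalRing

noncomputable section

/-!
Reducing coefficients modulo `a` maps `R(I)` onto `R(IR/aR)`, because `(IR/aR)^n` is the image of
`I^n`. An element of the kernel has its degree-`n` coefficient in `aR ∩ I^n = aI^n`, so the kernel
is `a·R(I)`; this gives both descriptions of `R(IR/aR)`. Since `a ∈ m`, the kernel lies in
`m·R(I)`, so reducing further modulo `m` identifies the two fiber cones.
-/

namespace Polynomial

variable {R S : Type*} [Semiring R] [Semiring S]

theorem exists_forall_coeff_rel (P : ℕ → S → R → Prop) (p : R[X])
    (h : ∀ n, ∃ s, P n s (p.coeff n)) (h0 : ∀ n, P n 0 0) :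
    ∃ q : S[X], ∀ n, P n (q.coeff n) (p.coeff n) := by
  classical
  choose s hs using h
  refine ⟨∑ n ∈ p.support, monomial n (s n), fun n => ?_⟩
  by_cases hp : p.coeff n = 0
  · simpa [finsetSum_coeff, coeff_monomial, hp] using h0 n
  · simpa [finsetSum_coeff, coeff_monomial, hp] using hs n

end Polynomial

namespace Ideal

variable {A B : Type*} [CommRing A] [CommRing B]

def quotientEquivQuotientMap {φ : A →+* B} (hφ : Function.Surjective φ) {M : Ideal A}
    (hM : RingHom.ker φ ≤ M) : A ⧸ M ≃+* B ⧸ M.map φ :=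
  RingEquiv.ofBijective (quotientMap _ φ le_comap_map)
    ⟨quotientMap_injective' (by rw [comap_map_of_surjective' φ hφ, sup_eq_left.2 hM]),
      quotientMap_surjective hφ⟩

end Ideal

section ReesAlgebra

open Polynomial

variable {R S : Type*} [CommRing R] [CommRing S] (f : R →+* S) (I : Ideal R)

theorem map_mem_reesAlgebra {p : R[X]} (hp : p ∈ reesAlgebra I) :
    p.map f ∈ reesAlgebra (I.map f) := by
  rw [mem_reesAlgebra_iff] at hp ⊢
  intro n
  rw [coeff_map, ← Ideal.map_pow]
  exact Ideal.mem_map_of_mem f (hp n)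

def reesAlgebraMap : reesAlgebra I →+* reesAlgebra (I.map f) :=
  (mapRingHom f).restrict _ _ fun _ => map_mem_reesAlgebra f I

@[simp]
theorem coe_reesAlgebraMap (p : reesAlgebra I) : (reesAlgebraMap f I p : S[X]) = p.1.map f :=
  rfl

theorem reesAlgebraMap_comp_algebraMap :
    (reesAlgebraMap f I).comp (algebraMap R (reesAlgebra I)) =
      (algebraMap S (reesAlgebra (I.map f))).comp f :=
  RingHom.ext fun _ => Subtype.ext (map_C f)

theorem map_reesAlgebraMap_map_algebraMap (J : Ideal R) :
    (J.map (algebraMap R (reesAlgebra I))).map (reesAlgebraMap f I) =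
      (J.map f).map (algebraMap S (reesAlgebra (I.map f))) := by
  rw [Ideal.map_map, Ideal.map_map, reesAlgebraMap_comp_algebraMap]

theorem reesAlgebraMap_surjective (hf : Function.Surjective f) :
    Function.Surjective (reesAlgebraMap f I) := by
  rintro ⟨g, hg⟩
  have hlift : ∀ n, ∃ x, x ∈ I ^ n ∧ f x = g.coeff n := fun n => by
    have hn := (mem_reesAlgebra_iff _ g).1 hg n
    rwa [← Ideal.map_pow, Ideal.mem_map_iff_of_surjective f hf] at hn
  obtain ⟨p, hp⟩ := exists_forall_coeff_rel (fun n x y => x ∈ I ^ n ∧ f x = y) g hlift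
    fun n => ⟨zero_mem _, map_zero f⟩
  refine ⟨⟨p, (mem_reesAlgebra_iff I p).2 fun n => (hp n).1⟩, Subtype.ext ?_⟩
  ext n
  simp [(hp n).2]

theorem mem_pow_of_mul_mem_pow {a : R} (hreg : ∀ n ≥ 1, IsSMulRegular (R ⧸ I ^ n) a)
    {n : ℕ} {r : R} (hr : a * r ∈ I ^ n) : r ∈ I ^ n := by
  rcases n.eq_zero_or_pos with rfl | hn
  · simp
  · exact mem_of_isSMulRegular_quotient_of_smul_mem (hreg n hn) hr

theorem ker_reesAlgebraMap_mk_span_singleton {a : R}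
    (hreg : ∀ n ≥ 1, IsSMulRegular (R ⧸ I ^ n) a) :
    RingHom.ker (reesAlgebraMap (Ideal.Quotient.mk (Ideal.span {a})) I) =
      (Ideal.span {a}).map (algebraMap R (reesAlgebra I)) := by
  refine le_antisymm (fun p hp => ?_) ?_
  · have hdiv : ∀ n, ∃ r, r ∈ I ^ n ∧ a * r = p.1.coeff n := fun n => by
      have hn : (p.1.map (Ideal.Quotient.mk (Ideal.span {a}))).coeff n = 0 := by
        rw [← coe_reesAlgebraMap, RingHom.mem_ker.1 hp]
        rfl
      rw [coeff_map, Ideal.Quotient.eq_zero_iff_mem] at hn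
      obtain ⟨r, hr⟩ := Ideal.mem_span_singleton'.1 hn
      rw [mul_comm] at hr
      exact ⟨r, mem_pow_of_mul_mem_pow I hreg (hr ▸ (mem_reesAlgebra_iff I _).1 p.2 n), hr⟩
    obtain ⟨q, hq⟩ := exists_forall_coeff_rel (fun n r x => r ∈ I ^ n ∧ a * r = x) p.1 hdiv
      fun n => ⟨zero_mem _, mul_zero a⟩
    have hpq : p = algebraMap R (reesAlgebra I) a *
        ⟨q, (mem_reesAlgebra_iff I q).2 fun n => (hq n).1⟩ := by
      refine Subtype.ext (Polynomial.ext fun n => ?_)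
      simp [coeff_C_mul, (hq n).2]
    rw [hpq]
    exact Ideal.mul_mem_right _ _ (Ideal.mem_map_of_mem _ (Ideal.mem_span_singleton_self a))
  · rw [Ideal.map_le_iff_le_comap]
    intro r hr
    rw [Ideal.mem_comap, RingHom.mem_ker, ← RingHom.comp_apply, reesAlgebraMap_comp_algebraMap,
      RingHom.comp_apply, Ideal.Quotient.eq_zero_iff_mem.2 hr, map_zero]

end ReesAlgebra

open scoped TensorProduct in
set_option synthInstance.maxHeartbeats 1000000 in
set_option maxHeartbeats 1000000 in
theorem stmt19_general (R : Type*) [CommRing R] [IsLocalRing R]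
    (I : Ideal R) (a : R) (ha : a ∈ maximalIdeal R)
    (hreg : ∀ n ≥ 1, IsSMulRegular (R ⧸ I ^ n) a) :
    Nonempty (↥(reesAlgebra (Ideal.map (Ideal.Quotient.mk (Ideal.span {a})) I)) ≃+*
        (↥(reesAlgebra I) ⊗[R] (R ⧸ Ideal.span {a}))) ∧
    Nonempty (↥(reesAlgebra (Ideal.map (Ideal.Quotient.mk (Ideal.span {a})) I)) ≃+*
        (↥(reesAlgebra I) ⧸ Ideal.map (algebraMap R ↥(reesAlgebra I)) (Ideal.span {a}))) ∧
    Nonempty ((↥(reesAlgebra (Ideal.map (Ideal.Quotient.mk (Ideal.span {a})) I)) ⧸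
          Ideal.map
            (algebraMap (R ⧸ Ideal.span {a})
              ↥(reesAlgebra (Ideal.map (Ideal.Quotient.mk (Ideal.span {a})) I)))
            (Ideal.map (Ideal.Quotient.mk (Ideal.span {a})) (maximalIdeal R))) ≃+*
        (↥(reesAlgebra I) ⧸ Ideal.map (algebraMap R ↥(reesAlgebra I)) (maximalIdeal R))) := by
  have hsurj := reesAlgebraMap_surjective (Ideal.Quotient.mk (Ideal.span {a})) I
    Ideal.Quotient.mk_surjective
  have hker := ker_reesAlgebraMap_mk_span_singleton I hreg
  let e := (Ideal.quotEquivOfEq hker.symm).trans (RingHom.quotientKerEquivOfSurjective hsurj)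
  refine ⟨⟨e.symm.trans (Algebra.TensorProduct.quotIdealMapEquivTensorQuot _ _).toRingEquiv⟩,
    ⟨e.symm⟩, ⟨?_⟩⟩
  have hkerM : RingHom.ker (reesAlgebraMap (Ideal.Quotient.mk (Ideal.span {a})) I) ≤
      (maximalIdeal R).map (algebraMap R (reesAlgebra I)) :=
    hker ▸ Ideal.map_mono ((Ideal.span_singleton_le_iff_mem _).2 ha)
  exact (Ideal.quotEquivOfEq (map_reesAlgebraMap_map_algebraMap _ I _)).symm.trans
    (Ideal.quotientEquivQuotientMap hsurj hkerM).symm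

open scoped TensorProduct in
set_option synthInstance.maxHeartbeats 1000000 in
set_option maxHeartbeats 1000000 in
theorem stmt19 (R : Type*) [CommRing R] [IsNoetherianRing R] [IsLocalRing R]
    (I : Ideal R) (a : R) (ha : a ∈ maximalIdeal R)
    (hreg : ∀ n ≥ 1, IsSMulRegular (R ⧸ I ^ n) a) :
    Nonempty (↥(reesAlgebra (Ideal.map (Ideal.Quotient.mk (Ideal.span {a})) I)) ≃+*
        (↥(reesAlgebra I) ⊗[R] (R ⧸ Ideal.span {a}))) ∧
    Nonempty (↥(reesAlgebra (Ideal.map (Ideal.Quotient.mk (Ideal.span {a})) I)) ≃+*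
        (↥(reesAlgebra I) ⧸ Ideal.map (algebraMap R ↥(reesAlgebra I)) (Ideal.span {a}))) ∧
    Nonempty ((↥(reesAlgebra (Ideal.map (Ideal.Quotient.mk (Ideal.span {a})) I)) ⧸
          Ideal.map
            (algebraMap (R ⧸ Ideal.span {a})
              ↥(reesAlgebra (Ideal.map (Ideal.Quotient.mk (Ideal.span {a})) I)))
            (Ideal.map (Ideal.Quotient.mk (Ideal.span {a})) (maximalIdeal R))) ≃+*
        (↥(reesAlgebra I) ⧸ Ideal.map (algebraMap R ↥(reesAlgebra I)) (maximalIdeal R))) :=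
  stmt19_general R I a ha hreg

end
end
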